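/- Let ε, δ, γ, γ' ∈ (0,1) with γ > ε, and suppose: (i) with probability at least 1 - δ the learner's output g satisfies P'({g ≠ f}) < ε; (ii) P' agrees with P outside X̃, P'(X̃ ∩ {f = -1}) = 0, and P' dominates P on subsets of X̃ ∩ {f = 1}; (iii) P(X̃ ∩ {f = 1}) > γ and P(X̃ ∩ {f = -1}) < γ'. Then with probability at least 1 - δ both conclusions hold simultaneously: P({x ∈ X̃ : g(x) = 1}) > γ - ε and P({x : g(x) ≠ f(x)}) < ε + γ'. -/

import Mathlib

open MeasureTheory
open scoped ENNReal

/-!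
Fix a sample with `P' {g ≠ f} < ε`. Since `P ≤ P'` on the target region `A = X̃ ∩ {f = 1}`, the
part of `A` that `g` misses costs `P` at most `ε`, which leaves mass `> γ - ε` for `X̃ ∩ {g = 1}`.
Since `P ≤ P'` also off `X̃`, the only place where `P` can charge more error than `P'` is the
omitted region `X̃ ∩ {f = -1}`, of `P`-mass `< γ'`. Both bounds thus hold on the event of (i).
-/

namespace MeasureTheory.Measure

variable {X : Type*} [MeasurableSpace X] {μ ν : Measure X} {s t : Set X}

theorem restrict_le_restrict_of_forall_le (hs : MeasurableSet s)
    (h : ∀ t, MeasurableSet t → t ⊆ s → μ t ≤ ν t) : μ.restrict s ≤ ν.restrict s :=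
  le_iff.2 fun t ht => by
    rw [restrict_apply ht, restrict_apply ht]
    exact h _ (ht.inter hs) Set.inter_subset_right

theorem restrict_union_le_restrict_union (hs : μ.restrict s ≤ ν.restrict s)
    (ht : μ.restrict t ≤ ν.restrict t) (hst : Disjoint s t) (htm : MeasurableSet t) :
    μ.restrict (s ∪ t) ≤ ν.restrict (s ∪ t) :=
  calc μ.restrict (s ∪ t) ≤ μ.restrict s + μ.restrict t := restrict_union_le s t
    _ ≤ ν.restrict s + ν.restrict t := add_le_add hs ht
    _ = ν.restrict (s ∪ t) := (restrict_union hst htm).symm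

theorem apply_le_of_restrict_le (h : μ.restrict s ≤ ν.restrict s) (t : Set X) :
    μ (t ∩ s) ≤ ν t :=
  calc μ (t ∩ s) ≤ μ.restrict s t := le_restrict_apply s t
    _ ≤ ν.restrict s t := h t
    _ ≤ ν t := restrict_apply_le s t

theorem apply_le_inter_add_sdiff_of_restrict_le (h : μ.restrict s ≤ ν.restrict s) (t : Set X) :
    μ s ≤ μ (s ∩ t) + ν (s \ t) :=
  calc μ s ≤ μ (s ∩ t) + μ (s \ t) := measure_le_inter_add_sdiff μ s t
    _ = μ (s ∩ t) + μ ((s \ t) ∩ s) := by rw [Set.inter_eq_left.2 Set.sdiff_subset]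
    _ ≤ μ (s ∩ t) + ν (s \ t) := add_le_add_right (apply_le_of_restrict_le h _) _

theorem apply_le_add_of_restrict_compl_le (h : μ.restrict sᶜ ≤ ν.restrict sᶜ) (t : Set X) :
    μ t ≤ ν t + μ s :=
  calc μ t ≤ μ (t ∩ s) + μ (t \ s) := measure_le_inter_add_sdiff μ t s
    _ ≤ μ s + ν t := add_le_add (measure_mono Set.inter_subset_right)
      (apply_le_of_restrict_le h t)
    _ = ν t + μ s := add_comm _ _

end MeasureTheory.Measure

theorem ENNReal.ofReal_sub_lt_of_lt_add {a : ℝ≥0∞} {x y : ℝ} (hy : 0 ≤ y) (hyx : y ≤ x)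
    (h : ENNReal.ofReal x < a + ENNReal.ofReal y) : ENNReal.ofReal (x - y) < a := by
  rw [ENNReal.ofReal_sub _ hy]
  exact ENNReal.sub_lt_of_lt_add (ENNReal.ofReal_le_ofReal hyx) h

theorem omission_attack_theorem_general {X Ω : Type*} [MeasurableSpace X] [MeasurableSpace Ω]
    (P P' : Measure X)
    (μ : Measure Ω)
    (Xt : Set X) (hXt : MeasurableSet Xt)
    (f : X → ℤ) (hf : Measurable f) (hfr : ∀ x, f x = 1 ∨ f x = -1)
    (g : Ω → X → ℤ)
    (ε δ γ γ' : ℝ)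
    (hε : ε ∈ Set.Ioo (0 : ℝ) 1) (hγ' : γ' ∈ Set.Ioo (0 : ℝ) 1)
    (hγε : γ > ε)
    -- (i) high-probability small loss under P'
    (hlearn : μ {ω | P' {x | g ω x ≠ f x} < ENNReal.ofReal ε} ≥ ENNReal.ofReal (1 - δ))
    -- (ii) redistribution hypotheses relating P' and P
    (hagree : ∀ E : Set X, MeasurableSet E → E ⊆ Xtᶜ → P' E = P E)
    (hdom : ∀ E : Set X, MeasurableSet E → E ⊆ Xt ∩ {x | f x = 1} → P' E ≥ P E)
    -- (iii) mass conditions on the attacked region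
    (hmass : P (Xt ∩ {x | f x = 1}) > ENNReal.ofReal γ)
    (homit : P (Xt ∩ {x | f x = -1}) < ENNReal.ofReal γ') :
    μ {ω | P {x ∈ Xt | g ω x = 1} > ENNReal.ofReal (γ - ε) ∧
           P {x | g ω x ≠ f x} < ENNReal.ofReal (ε + γ')} ≥ ENNReal.ofReal (1 - δ) := by
  set A := Xt ∩ {x | f x = 1}
  set N := Xt ∩ {x | f x = -1}
  have hA : MeasurableSet A := hXt.inter (hf (measurableSet_singleton 1))
  have hdomA : P.restrict A ≤ P'.restrict A := Measure.restrict_le_restrict_of_forall_le hA hdom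
  have hdomN : P.restrict Nᶜ ≤ P'.restrict Nᶜ := by
    have hN : Nᶜ = Xtᶜ ∪ A := by
      ext x
      rcases hfr x with hx | hx <;> simp [N, A, hx, em']
    have hagreeCompl : P.restrict Xtᶜ ≤ P'.restrict Xtᶜ :=
      ((Measure.restrict_congr_meas hXt.compl).2 fun E hE hEm => hagree E hEm hE).ge
    rw [hN]
    exact Measure.restrict_union_le_restrict_union hagreeCompl hdomA
      (disjoint_compl_left.mono_right Set.inter_subset_left) hA
  refine hlearn.trans (measure_mono fun ω (hω : P' {x | g ω x ≠ f x} < _) => ⟨?_, ?_⟩)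
  · refine ENNReal.ofReal_sub_lt_of_lt_add hε.1.le hγε.le (hmass.trans_le ?_)
    calc P A ≤ P (A ∩ {x | g ω x = 1}) + P' (A \ {x | g ω x = 1}) :=
          Measure.apply_le_inter_add_sdiff_of_restrict_le hdomA _
      _ ≤ P {x ∈ Xt | g ω x = 1} + ENNReal.ofReal ε := by
          refine add_le_add (measure_mono fun x hx => ⟨hx.1.1, hx.2⟩)
            ((measure_mono fun x hx => ?_).trans hω.le)
          exact fun hgf => hx.2 (hgf.trans hx.1.2)
  · calc P {x | g ω x ≠ f x} ≤ P' {x | g ω x ≠ f x} + P N :=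
          Measure.apply_le_add_of_restrict_compl_le hdomN _
      _ < ENNReal.ofReal ε + ENNReal.ofReal γ' := ENNReal.add_lt_add hω homit
      _ = ENNReal.ofReal (ε + γ') := (ENNReal.ofReal_add hε.1.le hγ'.1.le).symm

/-- Full statement of Theorem 1 of the paper (with `min_{h∈H} Ls(h)` absorbed
into `ε`): with probability at least `1 - δ` over the sample `ω`, both the
targeted-misclassification guarantee and the accuracy-preservation guarantee
hold simultaneously. -/
theorem omission_attack_theorem {X Ω : Type*} [MeasurableSpace X] [MeasurableSpace Ω]
    (P P' : Measure X) [IsProbabilityMeasure P] [IsProbabilityMeasure P']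
    (μ : Measure Ω) [IsProbabilityMeasure μ]
    (Xt : Set X) (hXt : MeasurableSet Xt)
    (f : X → ℤ) (hf : Measurable f) (hfr : ∀ x, f x = 1 ∨ f x = -1)
    (g : Ω → X → ℤ) (hg : ∀ ω, Measurable (g ω))
    (hgr : ∀ ω x, g ω x = 1 ∨ g ω x = -1)
    (ε δ γ γ' : ℝ)
    (hε : ε ∈ Set.Ioo (0 : ℝ) 1) (hδ : δ ∈ Set.Ioo (0 : ℝ) 1)
    (hγ : γ ∈ Set.Ioo (0 : ℝ) 1) (hγ' : γ' ∈ Set.Ioo (0 : ℝ) 1)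
    (hγε : γ > ε)
    -- (i) high-probability small loss under P'
    (hlearn : μ {ω | P' {x | g ω x ≠ f x} < ENNReal.ofReal ε} ≥ ENNReal.ofReal (1 - δ))
    -- (ii) redistribution hypotheses relating P' and P
    (hagree : ∀ E : Set X, MeasurableSet E → E ⊆ Xtᶜ → P' E = P E)
    (hnull : P' (Xt ∩ {x | f x = -1}) = 0)
    (hdom : ∀ E : Set X, MeasurableSet E → E ⊆ Xt ∩ {x | f x = 1} → P' E ≥ P E)
    -- (iii) mass conditions on the attacked region
    (hmass : P (Xt ∩ {x | f x = 1}) > ENNReal.ofReal γ)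
    (homit : P (Xt ∩ {x | f x = -1}) < ENNReal.ofReal γ') :
    μ {ω | P {x ∈ Xt | g ω x = 1} > ENNReal.ofReal (γ - ε) ∧
           P {x | g ω x ≠ f x} < ENNReal.ofReal (ε + γ')} ≥ ENNReal.ofReal (1 - δ) :=
  omission_attack_theorem_general P P' μ Xt hXt f hf hfr g ε δ γ γ' hε hγ' hγε hlearn hagree hdom
    hmass homit
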